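/- Let x : [a, b] → ℝⁿ be λ-Lipschitz. Then the map t ↦ gph(x|_{[a,t]}) from [a,b] to closed subsets of ℝ^{n+1}, where gph(x|_{[a,t]}) := {(s − t, x(s)) : s ∈ [a, t]} (the graph of the history of x at time t, shifted so current time is 0), is uniformly continuous with respect to the integrated set distance 𝐝; more precisely, for every ε > 0 there exists δ > 0 such that |t' − t''| ≤ δ implies 𝐝(gph(x|_{[a,t']}), gph(x|_{[a,t'']})) ≤ ε. -/
import Mathlib

/-- Truncated set distance `d_ρ(A,B) = sup_{|z| ≤ ρ} |d(z,A) − d(z,B)|`. -/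
noncomputable def dTrunc {E : Type*} [NormedAddCommGroup E] (A B : Set E) (ρ : ℝ) : ℝ :=
  sSup ((fun z => |Metric.infDist z A - Metric.infDist z B|) '' Metric.closedBall (0 : E) ρ)

/-- Integrated set distance `𝐝(A,B) = ∫₀^∞ d_ρ(A,B) e^{−ρ} dρ`. -/
noncomputable def dInt {E : Type*} [NormedAddCommGroup E] (A B : Set E) : ℝ :=
  ∫ ρ in Set.Ioi (0 : ℝ), dTrunc A B ρ * Real.exp (-ρ)

/-- Graph of the history of `x` at time `t` on `[a,t]`, shifted so current time is `0`,
as a subset of Euclidean `ℝ^{n+1}` (realized as the `L²` product `ℝ ×₂ ℝⁿ`). -/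
def gphHist {n : ℕ} (a : ℝ) (x : ℝ → EuclideanSpace ℝ (Fin n)) (t : ℝ) :
    Set (WithLp 2 (ℝ × EuclideanSpace ℝ (Fin n))) :=
  {z | ∃ s ∈ Set.Icc a t, (WithLp.equiv 2 _ z).1 = s - t ∧ (WithLp.equiv 2 _ z).2 = x s}

open Metric MeasureTheory Real Set

lemma sqrt_add_sq_le_add {u v : ℝ} (hu : 0 ≤ u) (hv : 0 ≤ v) :
    Real.sqrt (u ^ 2 + v ^ 2) ≤ u + v := by
  have h : u ^ 2 + v ^ 2 ≤ (u + v) ^ 2 := by nlinarith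
  calc Real.sqrt (u ^ 2 + v ^ 2) ≤ Real.sqrt ((u + v) ^ 2) := Real.sqrt_le_sqrt h
    _ = u + v := Real.sqrt_sq (by linarith)

lemma prodL2_dist_le {α β : Type*} [SeminormedAddCommGroup α] [SeminormedAddCommGroup β]
    (z w : WithLp 2 (α × β)) :
    dist z w ≤ dist z.fst w.fst + dist z.snd w.snd := by
  rw [WithLp.prod_dist_eq_of_L2]
  exact sqrt_add_sq_le_add dist_nonneg dist_nonneg

lemma dTrunc_nonneg {E : Type*} [NormedAddCommGroup E] (A B : Set E) (ρ : ℝ) :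
    0 ≤ dTrunc A B ρ :=
  Real.sSup_nonneg (by rintro y ⟨z, -, rfl⟩; exact abs_nonneg _)

lemma dTrunc_le {E : Type*} [NormedAddCommGroup E] {A B : Set E} {M : ℝ} (hM : 0 ≤ M)
    (h : ∀ z : E, |Metric.infDist z A - Metric.infDist z B| ≤ M) (ρ : ℝ) :
    dTrunc A B ρ ≤ M :=
  Real.sSup_le (by rintro y ⟨z, -, rfl⟩; exact h z) hM

lemma dTrunc_monotone {E : Type*} [NormedAddCommGroup E] {A B : Set E} {M : ℝ}
    (h : ∀ z : E, |Metric.infDist z A - Metric.infDist z B| ≤ M) :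
    Monotone (dTrunc A B) := by
  intro ρ ρ' hρ
  refine Real.sSup_le ?_ (dTrunc_nonneg A B ρ')
  rintro y ⟨z, hz, rfl⟩
  refine le_csSup ⟨M, ?_⟩ ⟨z, Metric.closedBall_subset_closedBall hρ hz, rfl⟩
  rintro y ⟨w, -, rfl⟩; exact h w

lemma dInt_le {E : Type*} [NormedAddCommGroup E] [MeasurableSpace E] {A B : Set E} {M : ℝ}
    (hM : 0 ≤ M) (h : ∀ z : E, |Metric.infDist z A - Metric.infDist z B| ≤ M) :
    dInt A B ≤ M := by
  have hmono : Monotone (dTrunc A B) := dTrunc_monotone h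
  have hmeas : Measurable (dTrunc A B) := hmono.measurable
  have hg : IntegrableOn (fun ρ : ℝ => M * Real.exp (-ρ)) (Set.Ioi 0) := by
    have := (exp_neg_integrableOn_Ioi 0 one_pos)
    simp only [neg_mul, one_mul] at this
    exact this.const_mul M
  have hf : IntegrableOn (fun ρ : ℝ => dTrunc A B ρ * Real.exp (-ρ)) (Set.Ioi 0) := by
    refine hg.mono' ((hmeas.mul (by fun_prop)).aestronglyMeasurable) ?_
    filter_upwards with ρ
    rw [Real.norm_eq_abs, abs_mul, abs_of_nonneg (dTrunc_nonneg A B ρ),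
      abs_of_nonneg (Real.exp_pos _).le]
    exact mul_le_mul_of_nonneg_right (dTrunc_le hM h ρ) (Real.exp_pos _).le
  have hle : dInt A B ≤ ∫ ρ in Set.Ioi (0 : ℝ), M * Real.exp (-ρ) := by
    refine setIntegral_mono_on hf hg measurableSet_Ioi ?_
    intro ρ _
    exact mul_le_mul_of_nonneg_right (dTrunc_le hM h ρ) (Real.exp_pos _).le
  calc dInt A B ≤ ∫ ρ in Set.Ioi (0 : ℝ), M * Real.exp (-ρ) := hle
    _ = M * ∫ ρ in Set.Ioi (0 : ℝ), Real.exp (-ρ) := by rw [integral_const_mul]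
    _ = M := by rw [integral_exp_neg_Ioi_zero, mul_one]

lemma gph_mem_dist {n : ℕ} {a b : ℝ} {x : ℝ → EuclideanSpace ℝ (Fin n)} {lam : ℝ}
    (hlam : 0 ≤ lam)
    (hlip : ∀ s ∈ Set.Icc a b, ∀ s' ∈ Set.Icc a b, ‖x s - x s'‖ ≤ lam * |s - s'|)
    {t' t'' : ℝ} (ht' : t' ∈ Set.Icc a b) (ht'' : t'' ∈ Set.Icc a b) (htt : t' ≤ t'') :
    (∀ z ∈ gphHist a x t', ∃ w ∈ gphHist a x t'', dist z w ≤ (1 + lam) * (t'' - t')) ∧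
    (∀ z ∈ gphHist a x t'', ∃ w ∈ gphHist a x t', dist z w ≤ (1 + lam) * (t'' - t')) := by
  obtain ⟨ha', hb'⟩ := ht'
  obtain ⟨ha'', hb''⟩ := ht''
  constructor
  · rintro z ⟨s, ⟨has, hst⟩, h1, h2⟩
    refine ⟨(WithLp.equiv 2 _).symm (s - t'', x s), ⟨s, ⟨has, hst.trans htt⟩, rfl, rfl⟩, ?_⟩
    have := prodL2_dist_le z ((WithLp.equiv 2 _).symm (s - t'', x s))
    have hfst : dist z.fst ((WithLp.equiv 2 (ℝ × EuclideanSpace ℝ (Fin n))).symm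
        (s - t'', x s)).fst = t'' - t' := by
      show dist (WithLp.equiv 2 _ z).1 (s - t'') = t'' - t'
      rw [h1, Real.dist_eq, abs_of_nonneg (by linarith)]
      ring
    have hsnd : dist z.snd ((WithLp.equiv 2 (ℝ × EuclideanSpace ℝ (Fin n))).symm
        (s - t'', x s)).snd = 0 := by
      show dist (WithLp.equiv 2 _ z).2 (x s) = 0
      rw [h2, dist_self]
    rw [hfst, hsnd] at this
    nlinarith
  · rintro z ⟨s, ⟨has, hst⟩, h1, h2⟩
    set s' := min s t' with hs'
    have has' : a ≤ s' := le_min has ha'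
    have hs't : s' ≤ t' := min_le_right _ _
    refine ⟨(WithLp.equiv 2 _).symm (s' - t', x s'), ⟨s', ⟨has', hs't⟩, rfl, rfl⟩, ?_⟩
    have hd := prodL2_dist_le z ((WithLp.equiv 2 _).symm (s' - t', x s'))
    have hss' : |s - s'| ≤ t'' - t' := by
      rcases le_total s t' with h | h
      · simp [hs', min_eq_left h, sub_self]; linarith
      · rw [hs', min_eq_right h, abs_of_nonneg (by linarith)]; linarith
    have hfst : dist z.fst ((WithLp.equiv 2 (ℝ × EuclideanSpace ℝ (Fin n))).symm
        (s' - t', x s')).fst ≤ t'' - t' := by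
      show dist (WithLp.equiv 2 _ z).1 (s' - t') ≤ t'' - t'
      rw [h1, Real.dist_eq]
      rcases le_total s t' with h | h
      · rw [hs', min_eq_left h]
        rw [abs_le]; constructor <;> linarith
      · rw [hs', min_eq_right h]
        rw [abs_le]; constructor <;> linarith
    have hsnd : dist z.snd ((WithLp.equiv 2 (ℝ × EuclideanSpace ℝ (Fin n))).symm
        (s' - t', x s')).snd ≤ lam * (t'' - t') := by
      show dist (WithLp.equiv 2 _ z).2 (x s') ≤ lam * (t'' - t')
      rw [h2, dist_eq_norm]
      calc ‖x s - x s'‖ ≤ lam * |s - s'| :=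
            hlip s ⟨has, hst.trans hb''⟩ s' ⟨has', hs't.trans hb'⟩
        _ ≤ lam * (t'' - t') := mul_le_mul_of_nonneg_left hss' hlam
    nlinarith

lemma gph_abs_infDist_le {n : ℕ} {a b : ℝ} {x : ℝ → EuclideanSpace ℝ (Fin n)} {lam : ℝ}
    (hlam : 0 ≤ lam)
    (hlip : ∀ s ∈ Set.Icc a b, ∀ s' ∈ Set.Icc a b, ‖x s - x s'‖ ≤ lam * |s - s'|)
    {t' t'' : ℝ} (ht' : t' ∈ Set.Icc a b) (ht'' : t'' ∈ Set.Icc a b) (htt : t' ≤ t'')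
    (z : WithLp 2 (ℝ × EuclideanSpace ℝ (Fin n))) :
    |Metric.infDist z (gphHist a x t') - Metric.infDist z (gphHist a x t'')| ≤
      (1 + lam) * (t'' - t') := by
  obtain ⟨H1, H2⟩ := gph_mem_dist hlam hlip ht' ht'' htt
  have hr : (0 : ℝ) ≤ (1 + lam) * (t'' - t') := by nlinarith
  have hfin : EMetric.hausdorffEdist (gphHist a x t') (gphHist a x t'') ≠ ⊤ := by
    have := EMetric.hausdorffEdist_le_of_mem_edist
      (r := ENNReal.ofReal ((1 + lam) * (t'' - t')))
      (fun w hw => by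
        obtain ⟨y, hy, hd⟩ := H1 w hw
        exact ⟨y, hy, (edist_le_ofReal hr).2 hd⟩)
      (fun w hw => by
        obtain ⟨y, hy, hd⟩ := H2 w hw
        exact ⟨y, hy, (edist_le_ofReal hr).2 hd⟩)
    exact ne_top_of_le_ne_top ENNReal.ofReal_ne_top this
  have hHd : Metric.hausdorffDist (gphHist a x t') (gphHist a x t'') ≤ (1 + lam) * (t'' - t') :=
    Metric.hausdorffDist_le_of_mem_dist hr H1 H2
  rw [abs_le]
  constructor
  · have := Metric.infDist_le_infDist_add_hausdorffDist (x := z)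
      (s := gphHist a x t') (t := gphHist a x t'') hfin
    linarith
  · have := Metric.infDist_le_infDist_add_hausdorffDist (x := z)
      (s := gphHist a x t'') (t := gphHist a x t')
      (by rwa [EMetric.hausdorffEdist_comm])
    rw [Metric.hausdorffDist_comm] at this
    linarith

lemma dInt_gph_le {n : ℕ} {a b : ℝ} {x : ℝ → EuclideanSpace ℝ (Fin n)} {lam : ℝ}
    (hlam : 0 ≤ lam)
    (hlip : ∀ s ∈ Set.Icc a b, ∀ s' ∈ Set.Icc a b, ‖x s - x s'‖ ≤ lam * |s - s'|)
    {t' t'' : ℝ} (ht' : t' ∈ Set.Icc a b) (ht'' : t'' ∈ Set.Icc a b) (htt : t' ≤ t'') :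
    dInt (gphHist a x t') (gphHist a x t'') ≤ (1 + lam) * (t'' - t') := by
  letI : MeasurableSpace (WithLp 2 (ℝ × EuclideanSpace ℝ (Fin n))) := borel _
  exact dInt_le (by nlinarith) (gph_abs_infDist_le hlam hlip ht' ht'' htt)

lemma dTrunc_comm {E : Type*} [NormedAddCommGroup E] (A B : Set E) (ρ : ℝ) :
    dTrunc A B ρ = dTrunc B A ρ := by
  unfold dTrunc
  congr 1
  ext y
  constructor <;> rintro ⟨z, hz, rfl⟩ <;> exact ⟨z, hz, (abs_sub_comm _ _)⟩

lemma dInt_comm {E : Type*} [NormedAddCommGroup E] (A B : Set E) : dInt A B = dInt B A := by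
  unfold dInt
  simp_rw [dTrunc_comm]

theorem stmt14 (n : ℕ) (a b : ℝ) (hab : a ≤ b)
    (x : ℝ → EuclideanSpace ℝ (Fin n)) (lam : ℝ) (hlam : 0 ≤ lam)
    (hlip : ∀ s ∈ Set.Icc a b, ∀ s' ∈ Set.Icc a b, ‖x s - x s'‖ ≤ lam * |s - s'|) :
    ∀ ε : ℝ, 0 < ε → ∃ δ : ℝ, 0 < δ ∧ ∀ t' ∈ Set.Icc a b, ∀ t'' ∈ Set.Icc a b,
      |t' - t''| ≤ δ → dInt (gphHist a x t') (gphHist a x t'') ≤ ε := by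
  intro ε hε
  have h1lam : (0 : ℝ) < 1 + lam := by linarith
  refine ⟨ε / (1 + lam), by positivity, ?_⟩
  intro t' ht' t'' ht'' hd
  have key : ∀ u ∈ Set.Icc a b, ∀ v ∈ Set.Icc a b, u ≤ v → v - u ≤ ε / (1 + lam) →
      dInt (gphHist a x u) (gphHist a x v) ≤ ε := by
    intro u hu v hv huv hδ
    calc dInt (gphHist a x u) (gphHist a x v) ≤ (1 + lam) * (v - u) :=
          dInt_gph_le hlam hlip hu hv huv
      _ ≤ (1 + lam) * (ε / (1 + lam)) := by
          exact mul_le_mul_of_nonneg_left hδ h1lam.le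
      _ = ε := by field_simp
  rcases le_total t' t'' with h | h
  · exact key t' ht' t'' ht'' h (by rw [abs_sub_comm, abs_of_nonneg (by linarith)] at hd; linarith)
  · rw [dInt_comm]
    exact key t'' ht'' t' ht' h (by rw [abs_of_nonneg (by linarith)] at hd; linarith)
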